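/- The forgetful map π from the Hopf algebra H of TAGs to the commutative Hopf algebra H^c of graphs (with disjoint union product and subgraph/contraction coproduct), defined on TAGs by π(Γ,μ) = Γ, is a morphism of Hopf algebras. -/

import Mathlib

open scoped Classical TensorProduct

/-- A concrete representative of a totally assigned graph (TAG): a graph with totally
ordered edge set (edges carry the standard labelling `Fin ne`), whose vertices are
natural numbers (the vertex set being the set of endpoints of edges, so that there
are no isolated vertices). -/
structure PreTAG where
  ne : ℕ
  ends : Fin ne → Sym2 ℕ

/-- Isomorphism of TAG representatives: a bijection of vertices matching up the
edges *preserving the total edge order*. -/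
def TagRel (a b : PreTAG) : Prop :=
  ∃ (hm : a.ne = b.ne) (e : ℕ ≃ ℕ),
    ∀ i : Fin a.ne, Sym2.map e (a.ends i) = b.ends (Fin.cast hm i)

theorem tagRel_refl (a : PreTAG) : TagRel a a :=
  ⟨rfl, Equiv.refl ℕ, fun i => by simp⟩

theorem tagRel_symm : ∀ {a b : PreTAG}, TagRel a b → TagRel b a := by
  rintro a b ⟨hm, e, h⟩
  refine ⟨hm.symm, e.symm, fun j => ?_⟩
  have h2 := h (Fin.cast hm.symm j)
  have h3 : Fin.cast hm (Fin.cast hm.symm j) = j := by ext; simp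
  rw [h3] at h2
  rw [← h2, Sym2.map_map]
  simp [Equiv.symm_comp_self]

theorem tagRel_trans : ∀ {a b c : PreTAG}, TagRel a b → TagRel b c → TagRel a c := by
  rintro a b c ⟨hm, e, h⟩ ⟨hm', e', h'⟩
  refine ⟨hm.trans hm', e.trans e', fun i => ?_⟩
  have h2 := h' (Fin.cast hm i)
  have h3 : Fin.cast hm' (Fin.cast hm i) = Fin.cast (hm.trans hm') i := by ext; simp
  rw [h3] at h2
  rw [← h2, ← h i, Sym2.map_map]
  rfl

instance tagSetoid : Setoid PreTAG :=
  ⟨TagRel, ⟨tagRel_refl, tagRel_symm, tagRel_trans⟩⟩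

/-- Totally assigned graphs: isomorphism classes of representatives. -/
def TAGQ := Quotient tagSetoid

/-- The empty TAG, unit of the product. -/
def emptyPre : PreTAG := ⟨0, fun i => i.elim0⟩

/-- Disjoint union of two TAG representatives, with the ordinal sum order on edges
(all edges of `a` come before all edges of `b`); vertices are kept disjoint by
relabelling through `2*·` and `2*·+1`. -/
def mulPre (a b : PreTAG) : PreTAG where
  ne := a.ne + b.ne
  ends := fun i =>
    match finSumFinEquiv.symm i with
    | Sum.inl j => (a.ends j).map (fun v => 2 * v)
    | Sum.inr j => (b.ends j).map (fun v => 2 * v + 1)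

/-- Product of TAGs: disjoint union with the ordinal sum order. -/
noncomputable def mulQ (x y : TAGQ) : TAGQ := ⟦mulPre x.out y.out⟧

/-- The totally assigned subgraph of `a` determined by a subset `S` of its edges:
its edges are those in `S` with the order (and endpoints) induced from `a`. -/
noncomputable def subPre (a : PreTAG) (S : Finset (Fin a.ne)) : PreTAG where
  ne := S.card
  ends := fun j => a.ends (S.orderIsoOfFin rfl j)

/-- Two vertices are directly linked in the subgraph with edge set `S`. -/
def conRel (a : PreTAG) (S : Finset (Fin a.ne)) : ℕ → ℕ → Prop :=
  fun u v => ∃ i ∈ S, u ∈ a.ends i ∧ v ∈ a.ends i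

/-- The contraction (shrinking) `a / S`: each connected component of the subgraph with
edge set `S` is shrunk to a single vertex (the least vertex of the component); the
remaining edges are those not in `S`, with the order induced from `a`. -/
noncomputable def conPre (a : PreTAG) (S : Finset (Fin a.ne)) : PreTAG where
  ne := Sᶜ.card
  ends := fun j =>
    (a.ends (Sᶜ.orderIsoOfFin rfl j)).map
      (fun v => sInf {u | Relation.EqvGen (conRel a S) u v})

/-- The free vector space spanned by TAGs. -/
abbrev HT (K : Type) [Field K] : Type := TAGQ →₀ K

/-- The unit: the empty TAG. -/
noncomputable def oneH (K : Type) [Field K] : HT K := Finsupp.single ⟦emptyPre⟧ 1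

/-- The product of `HT K`, bilinear extension of the product of TAGs. -/
noncomputable def mulLin (K : Type) [Field K] : HT K →ₗ[K] HT K →ₗ[K] HT K :=
  Finsupp.lsum K fun a => LinearMap.smulRight LinearMap.id
    (Finsupp.lsum K fun b => LinearMap.smulRight LinearMap.id
      (Finsupp.single (mulQ a b) 1))

/-- The product as a map `HT K ⊗ HT K → HT K`. -/
noncomputable def mulMap (K : Type) [Field K] : HT K ⊗[K] HT K →ₗ[K] HT K :=
  TensorProduct.lift (mulLin K)

/-- Coproduct of a single TAG: the sum over all totally assigned subgraphs
(equivalently, over all subsets of the edge set) of subgraph ⊗ contracted graph. -/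
noncomputable def deltaT (K : Type) [Field K] (g : TAGQ) : HT K ⊗[K] HT K :=
  ∑ S : Finset (Fin g.out.ne),
    Finsupp.single (⟦subPre g.out S⟧ : TAGQ) (1 : K) ⊗ₜ
      Finsupp.single (⟦conPre g.out S⟧ : TAGQ) (1 : K)

/-- The coproduct of `HT K`. -/
noncomputable def deltaH (K : Type) [Field K] : HT K →ₗ[K] HT K ⊗[K] HT K :=
  Finsupp.lsum K fun g => LinearMap.smulRight LinearMap.id (deltaT K g)

/-- The counit: coefficient of the empty TAG. -/
noncomputable def epsH (K : Type) [Field K] : HT K →ₗ[K] K :=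
  Finsupp.lapply ⟦emptyPre⟧


/-- Isomorphism of graph representatives, forgetting the edge order. -/
def GraphRel (a b : PreTAG) : Prop :=
  ∃ (σ : Fin a.ne ≃ Fin b.ne) (e : ℕ ≃ ℕ),
    ∀ i : Fin a.ne, Sym2.map e (a.ends i) = b.ends (σ i)

def graphSetoid : Setoid PreTAG :=
  ⟨GraphRel, by
    constructor
    · exact fun a => ⟨Equiv.refl _, Equiv.refl ℕ, fun i => by simp⟩
    · rintro a b ⟨σ, e, h⟩
      refine ⟨σ.symm, e.symm, fun j => ?_⟩
      have h2 := h (σ.symm j)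
      rw [Equiv.apply_symm_apply] at h2
      rw [← h2, Sym2.map_map]
      simp [Equiv.symm_comp_self]
    · rintro a b c ⟨σ, e, h⟩ ⟨σ', e', h'⟩
      refine ⟨σ.trans σ', e.trans e', fun i => ?_⟩
      have : (σ.trans σ') i = σ' (σ i) := rfl
      rw [this, ← h' (σ i), ← h i, Sym2.map_map]
      rfl⟩

/-- Graphs: isomorphism classes of representatives with the edge order forgotten. -/
def GQ := Quotient graphSetoid

/-- The commutative algebra of graphs. -/
abbrev HC (K : Type) [Field K] : Type := GQ →₀ K

noncomputable def oneC (K : Type) [Field K] : HC K :=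
  Finsupp.single (Quotient.mk graphSetoid emptyPre) 1

/-- Product of `HC K`: bilinear extension of the disjoint union of graphs. -/
noncomputable def mulLinC (K : Type) [Field K] : HC K →ₗ[K] HC K →ₗ[K] HC K :=
  Finsupp.lsum K fun a => LinearMap.smulRight LinearMap.id
    (Finsupp.lsum K fun b => LinearMap.smulRight LinearMap.id
      (Finsupp.single (Quotient.mk graphSetoid (mulPre a.out b.out)) 1))

/-- Coproduct of `HC K`: sum over subgraphs of subgraph ⊗ contracted graph. -/
noncomputable def deltaC (K : Type) [Field K] : HC K →ₗ[K] HC K ⊗[K] HC K :=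
  Finsupp.lsum K fun g => LinearMap.smulRight LinearMap.id
    (∑ S : Finset (Fin g.out.ne),
      Finsupp.single (Quotient.mk graphSetoid (subPre g.out S)) (1 : K) ⊗ₜ
        Finsupp.single (Quotient.mk graphSetoid (conPre g.out S)) (1 : K))

noncomputable def epsC (K : Type) [Field K] : HC K →ₗ[K] K :=
  Finsupp.lapply (Quotient.mk graphSetoid emptyPre)

/-- The forgetful map `π : H → H^c`, sending a TAG `(Γ,μ)` to the underlying graph. -/
noncomputable def piH (K : Type) [Field K] : HT K →ₗ[K] HC K :=
  Finsupp.lsum K fun g => LinearMap.smulRight LinearMap.id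
    (Finsupp.single (Quotient.mk graphSetoid g.out) 1)


/-!
Everything reduces to statements about representatives, since `π` sends a basis TAG to its
underlying graph. Forgetting the edge order makes the disjoint union commutative, by swapping the
two parity classes of vertices. For the coproduct, a graph isomorphism carries each edge set `S`
to an edge set `S'`, the subgraph of `S` onto that of `S'` and the components of `S` onto those of
`S'`; the contracted graphs, whose vertices are the least vertices of components, are then
isomorphic through any permutation of `ℕ` extending the induced map between these finitely many
least vertices.
-/

namespace PreTAG

def verts (a : PreTAG) : Set ℕ := {v | ∃ i, v ∈ a.ends i}

lemma verts_finite (a : PreTAG) : a.verts.Finite := by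
  have : a.verts = ⋃ i, ((a.ends i).toFinset : Set ℕ) := by ext; simp [verts]
  rw [this]
  exact Set.finite_iUnion fun i => Finset.finite_toSet _

end PreTAG

lemma TagRel.graphRel {a b : PreTAG} (h : TagRel a b) : GraphRel a b :=
  let ⟨hm, e, he⟩ := h
  ⟨finCongr hm, e, he⟩

lemma GraphRel.ne_eq {a b : PreTAG} (h : GraphRel a b) : a.ne = b.ne := by
  obtain ⟨σ, -, -⟩ := h
  simpa using Fintype.card_congr σ

lemma tagRel_of_ne_eq_zero {a b : PreTAG} (ha : a.ne = 0) (hb : b.ne = 0) : TagRel a b :=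
  ⟨ha.trans hb.symm, Equiv.refl ℕ, fun i => (Fin.cast ha i).elim0⟩

lemma graphRel_out_mk (p : PreTAG) : GraphRel (Quotient.mk graphSetoid p).out p :=
  Quotient.mk_out (s := graphSetoid) p

def sumEnds (a b : PreTAG) : Fin a.ne ⊕ Fin b.ne → Sym2 (ℕ ⊕ ℕ) :=
  Sum.elim (fun j => (a.ends j).map Sum.inl) (fun j => (b.ends j).map Sum.inr)

lemma mulPre_ends_finSumFinEquiv (a b : PreTAG) (x : Fin a.ne ⊕ Fin b.ne) :
    (mulPre a b).ends (finSumFinEquiv x) = (sumEnds a b x).map Equiv.natSumNatEquivNat := by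
  cases x <;> simp [mulPre, sumEnds, Sym2.map_map, Function.comp_def]

lemma graphRel_mulPre {a b c d : PreTAG} (σ : Fin a.ne ⊕ Fin b.ne ≃ Fin c.ne ⊕ Fin d.ne)
    (e : ℕ ⊕ ℕ ≃ ℕ ⊕ ℕ) (h : ∀ x, (sumEnds a b x).map e = sumEnds c d (σ x)) :
    GraphRel (mulPre a b) (mulPre c d) := by
  refine ⟨finSumFinEquiv.symm.trans (σ.trans finSumFinEquiv),
    Equiv.natSumNatEquivNat.symm.trans (e.trans Equiv.natSumNatEquivNat), fun i => ?_⟩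
  obtain ⟨x, rfl⟩ := finSumFinEquiv.surjective i
  change _ = (mulPre c d).ends (finSumFinEquiv (σ (finSumFinEquiv.symm (finSumFinEquiv x))))
  rw [Equiv.symm_apply_apply, mulPre_ends_finSumFinEquiv, mulPre_ends_finSumFinEquiv, ← h x,
    Sym2.map_map, Sym2.map_map]
  congr 1
  ext v
  simp only [Function.comp_apply, Equiv.trans_apply, Equiv.symm_apply_apply]

lemma mulPre_comm (a b : PreTAG) : GraphRel (mulPre a b) (mulPre b a) :=
  graphRel_mulPre (Equiv.sumComm _ _) (Equiv.sumComm ℕ ℕ) fun x => by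
    cases x <;> simp [sumEnds, Sym2.map_map, Function.comp_def]

lemma GraphRel.mulPre {a a' b b' : PreTAG} (ha : GraphRel a a') (hb : GraphRel b b') :
    GraphRel (mulPre a b) (mulPre a' b') := by
  obtain ⟨σ₁, e₁, h₁⟩ := ha
  obtain ⟨σ₂, e₂, h₂⟩ := hb
  refine graphRel_mulPre (σ₁.sumCongr σ₂) (e₁.sumCongr e₂) fun x => ?_
  cases x <;> simp [sumEnds, Sym2.map_map, Function.comp_def, ← h₁, ← h₂]

noncomputable def minRep (r : ℕ → ℕ → Prop) (v : ℕ) : ℕ :=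
  sInf {u | Relation.EqvGen r u v}

lemma eqvGen_minRep (r : ℕ → ℕ → Prop) (v : ℕ) : Relation.EqvGen r (minRep r v) v :=
  Nat.sInf_mem (s := {u | Relation.EqvGen r u v}) ⟨v, .refl v⟩

lemma minRep_eq_minRep_iff {r : ℕ → ℕ → Prop} {u v : ℕ} :
    minRep r u = minRep r v ↔ Relation.EqvGen r u v := by
  refine ⟨fun h => ?_, fun h => ?_⟩
  · exact ((eqvGen_minRep r u).symm _ _).trans _ _ _ (h ▸ eqvGen_minRep r v)
  · unfold minRep
    congr 1
    ext w
    exact ⟨fun hw => hw.trans _ _ _ h, fun hw => hw.trans _ _ _ (h.symm _ _)⟩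

lemma Relation.EqvGen.map {α β : Type*} {r : α → α → Prop} {r' : β → β → Prop} {f : α → β}
    (hf : ∀ u v, r u v → r' (f u) (f v)) {u v : α} (h : Relation.EqvGen r u v) :
    Relation.EqvGen r' (f u) (f v) := by
  induction h with
  | rel x y hxy => exact .rel _ _ (hf x y hxy)
  | refl x => exact .refl _
  | symm x y _ ih => exact ih.symm _ _
  | trans x y z _ _ ih₁ ih₂ => exact ih₁.trans _ _ _ ih₂

lemma Equiv.eqvGen_iff {α β : Type*} {r : α → α → Prop} {r' : β → β → Prop} (e : α ≃ β)
    (he : ∀ u v, r u v ↔ r' (e u) (e v)) {u v : α} :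
    Relation.EqvGen r u v ↔ Relation.EqvGen r' (e u) (e v) := by
  refine ⟨Relation.EqvGen.map fun x y => (he x y).1, fun h => ?_⟩
  simpa using h.map (r' := r) (f := e.symm) fun x y hxy => by simpa [he] using hxy

lemma exists_equiv_minRep {r r' : ℕ → ℕ → Prop} (e : ℕ ≃ ℕ)
    (he : ∀ u v, Relation.EqvGen r u v ↔ Relation.EqvGen r' (e u) (e v))
    {s : Set ℕ} (hs : s.Finite) :
    ∃ ε : ℕ ≃ ℕ, ∀ v ∈ s, ε (minRep r v) = minRep r' (e v) := by
  have hmin : ∀ v, minRep r' (e (minRep r v)) = minRep r' (e v) := fun v =>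
    minRep_eq_minRep_iff.2 ((he _ _).1 (eqvGen_minRep r v))
  let f : (minRep r '' s) ↪ ℕ :=
    ⟨fun x => minRep r' (e x), by
      rintro ⟨_, u, -, rfl⟩ ⟨_, v, -, rfl⟩
        (huv : minRep r' (e (minRep r u)) = minRep r' (e (minRep r v)))
      rw [hmin, hmin, minRep_eq_minRep_iff, ← he, ← minRep_eq_minRep_iff] at huv
      exact Subtype.ext huv⟩
  obtain ⟨ε, hε⟩ := Cardinal.extend_function_of_lt f
    ((hs.image _).lt_aleph0.trans_eq Cardinal.mk_nat.symm) ⟨Equiv.refl ℕ⟩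
  exact ⟨ε, fun v hv => (hε ⟨_, v, hv, rfl⟩).trans (hmin v)⟩

lemma graphRel_restrict {m n : ℕ} {x : Fin m → Sym2 ℕ} {y : Fin n → Sym2 ℕ}
    {T : Finset (Fin m)} {T' : Finset (Fin n)} (σ : Fin m ≃ Fin n) (hT : ∀ i, i ∈ T ↔ σ i ∈ T')
    (e : ℕ ≃ ℕ) (h : ∀ i, (x i).map e = y (σ i)) :
    GraphRel ⟨T.card, fun j => x (T.orderIsoOfFin rfl j)⟩
      ⟨T'.card, fun j => y (T'.orderIsoOfFin rfl j)⟩ := by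
  refine ⟨(T.orderIsoOfFin rfl).toEquiv.trans
    ((σ.subtypeEquiv hT).trans (T'.orderIsoOfFin rfl).toEquiv.symm), e, fun j => ?_⟩
  simp [h]

section congr

variable {a b : PreTAG} {σ : Fin a.ne ≃ Fin b.ne} {e : ℕ ≃ ℕ}
  (h : ∀ i, (a.ends i).map e = b.ends (σ i))
  {S : Finset (Fin a.ne)} {S' : Finset (Fin b.ne)} (hS : ∀ i, i ∈ S ↔ σ i ∈ S')
include h hS

lemma conRel_iff_of_graphRel {u v : ℕ} : conRel a S u v ↔ conRel b S' (e u) (e v) := by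
  refine ⟨fun ⟨i, hi, hu, hv⟩ => ⟨σ i, (hS i).1 hi, ?_, ?_⟩, fun ⟨i', hi', hu, hv⟩ => ?_⟩
  · exact h i ▸ Sym2.mem_map.2 ⟨u, hu, rfl⟩
  · exact h i ▸ Sym2.mem_map.2 ⟨v, hv, rfl⟩
  obtain ⟨i, rfl⟩ := σ.surjective i'
  rw [← h i, Sym2.mem_map] at hu hv
  obtain ⟨u', hu', hu⟩ := hu
  obtain ⟨v', hv', hv⟩ := hv
  exact ⟨i, (hS i).2 hi', e.injective hu ▸ hu', e.injective hv ▸ hv'⟩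

lemma subPre_graphRel : GraphRel (subPre a S) (subPre b S') :=
  graphRel_restrict σ hS e h

lemma conPre_graphRel : GraphRel (conPre a S) (conPre b S') := by
  obtain ⟨ε, hε⟩ := exists_equiv_minRep e
    (fun _ _ => e.eqvGen_iff fun _ _ => conRel_iff_of_graphRel h hS) a.verts_finite
  refine graphRel_restrict (x := fun i => (a.ends i).map (minRep (conRel a S)))
    (y := fun i => (b.ends i).map (minRep (conRel b S'))) σ
    (fun i => by simp only [Finset.mem_compl, hS]) ε fun i => ?_
  simp only [Sym2.map_map, ← h i]
  exact Sym2.map_congr fun v hv => hε v ⟨i, hv⟩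

end congr

noncomputable def TAGQ.graph (g : TAGQ) : GQ := Quotient.mk graphSetoid g.out

lemma TAGQ.graph_mk (p : PreTAG) : TAGQ.graph ⟦p⟧ = Quotient.mk graphSetoid p :=
  Quotient.sound (Quotient.mk_out (s := tagSetoid) p).graphRel

lemma TAGQ.graph_eq_empty_iff (g : TAGQ) :
    g.graph = Quotient.mk graphSetoid emptyPre ↔ g = ⟦emptyPre⟧ := by
  refine ⟨fun hg => ?_, fun hg => hg ▸ TAGQ.graph_mk emptyPre⟩
  have hne : g.out.ne = 0 := (Quotient.exact hg : GraphRel g.out emptyPre).ne_eq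
  exact (Quotient.out_eq g).symm.trans (Quotient.sound (tagRel_of_ne_eq_zero hne rfl))

noncomputable def GQ.mul (x y : GQ) : GQ := Quotient.mk graphSetoid (mulPre x.out y.out)

lemma GQ.mul_mk (p q : PreTAG) :
    GQ.mul (Quotient.mk graphSetoid p) (Quotient.mk graphSetoid q) =
      Quotient.mk graphSetoid (mulPre p q) :=
  Quotient.sound ((graphRel_out_mk p).mulPre (graphRel_out_mk q))

lemma GQ.mul_comm (x y : GQ) : x.mul y = y.mul x :=
  Quotient.sound (mulPre_comm x.out y.out)

lemma TAGQ.graph_mulQ (g h : TAGQ) : (mulQ g h).graph = g.graph.mul h.graph :=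
  (TAGQ.graph_mk _).trans (GQ.mul_mk _ _).symm

noncomputable def deltaPre (K : Type) [Field K] (p : PreTAG) : HC K ⊗[K] HC K :=
  ∑ S : Finset (Fin p.ne),
    Finsupp.single (Quotient.mk graphSetoid (subPre p S)) (1 : K) ⊗ₜ
      Finsupp.single (Quotient.mk graphSetoid (conPre p S)) (1 : K)

lemma GraphRel.deltaPre_eq (K : Type) [Field K] {a b : PreTAG} (hab : GraphRel a b) :
    deltaPre K a = deltaPre K b := by
  obtain ⟨σ, e, h⟩ := hab
  refine Fintype.sum_equiv σ.finsetCongr _ _ fun S => ?_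
  have hS : ∀ i, i ∈ S ↔ σ i ∈ σ.finsetCongr S := by simp
  rw [Quotient.sound (s := graphSetoid) (subPre_graphRel h hS),
    Quotient.sound (s := graphSetoid) (conPre_graphRel h hS)]

section linear

variable (K : Type) [Field K]

lemma piH_single (g : TAGQ) (c : K) : piH K (Finsupp.single g c) = Finsupp.single g.graph c := by
  simp only [piH, Finsupp.lsum_single, LinearMap.smulRight_apply, LinearMap.id_apply]
  exact Finsupp.smul_single_one _ _

lemma piH_single_mk (p : PreTAG) (c : K) :
    piH K (Finsupp.single (⟦p⟧ : TAGQ) c) = Finsupp.single (Quotient.mk graphSetoid p) c :=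
  -- the final `rfl` identifies the index types `GQ` and `Quotient graphSetoid`
  (piH_single K _ c).trans (by rw [TAGQ.graph_mk]; rfl)

lemma mulLin_single (g h : TAGQ) (m n : K) :
    mulLin K (Finsupp.single g m) (Finsupp.single h n) = Finsupp.single (mulQ g h) (m * n) := by
  simp [mulLin]

lemma mulLinC_single (x y : GQ) (m n : K) :
    mulLinC K (Finsupp.single x m) (Finsupp.single y n) = Finsupp.single (x.mul y) (m * n) := by
  simp only [mulLinC, Finsupp.lsum_single, LinearMap.smulRight_apply, LinearMap.id_apply,
    LinearMap.smul_apply, smul_smul]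
  exact Finsupp.smul_single_one _ _

lemma deltaH_single (g : TAGQ) (c : K) : deltaH K (Finsupp.single g c) = c • deltaT K g := by
  simp [deltaH]

lemma epsH_single (g : TAGQ) (c : K) :
    epsH K (Finsupp.single g c) = if g = ⟦emptyPre⟧ then c else 0 :=
  Finsupp.single_apply

lemma epsC_single (x : GQ) (c : K) :
    epsC K (Finsupp.single x c) = if x = Quotient.mk graphSetoid emptyPre then c else 0 :=
  Finsupp.single_apply

lemma deltaC_single (x : GQ) (c : K) :
    deltaC K (Finsupp.single x c) = c • deltaPre K x.out := by
  simp [deltaC, deltaPre]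

lemma map_piH_deltaT (g : TAGQ) :
    TensorProduct.map (piH K) (piH K) (deltaT K g) = deltaPre K g.out := by
  rw [deltaT, map_sum]
  refine Finset.sum_congr rfl fun S _ => ?_
  rw [TensorProduct.map_tmul, piH_single_mk, piH_single_mk]
  rfl

end linear

theorem tag_forgetful_hopf_morphism_general (K : Type) [Field K] :
    (∀ u v : HC K, mulLinC K u v = mulLinC K v u) ∧
    (∀ x y : HT K, piH K (mulLin K x y) = mulLinC K (piH K x) (piH K y)) ∧
    (piH K (oneH K) = oneC K) ∧
    (TensorProduct.map (piH K) (piH K) ∘ₗ deltaH K = deltaC K ∘ₗ piH K) ∧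
    (epsC K ∘ₗ piH K = epsH K) := by
  have hcomm : mulLinC K = (mulLinC K).flip :=
    Finsupp.lhom_ext fun x m => Finsupp.lhom_ext fun y n => by
      simp [mulLinC_single, GQ.mul_comm x, mul_comm m]
  have hmul : (mulLin K).compr₂ (piH K) = (mulLinC K).compl₁₂ (piH K) (piH K) :=
    Finsupp.lhom_ext fun g m => Finsupp.lhom_ext fun h n => by
      simp only [LinearMap.compr₂_apply, LinearMap.compl₁₂_apply, mulLin_single, piH_single,
        mulLinC_single, TAGQ.graph_mulQ]
  refine ⟨fun u v => LinearMap.congr_fun₂ hcomm u v, fun x y => LinearMap.congr_fun₂ hmul x y,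
    ?_, Finsupp.lhom_ext fun g c => ?_, Finsupp.lhom_ext fun g c => ?_⟩
  · exact piH_single_mk K emptyPre 1
  · rw [LinearMap.comp_apply, LinearMap.comp_apply, deltaH_single, map_smul, map_piH_deltaT,
      piH_single, deltaC_single, TAGQ.graph, (graphRel_out_mk g.out).deltaPre_eq K]
  · simp only [LinearMap.comp_apply, piH_single, epsC_single, epsH_single,
      TAGQ.graph_eq_empty_iff]

/-- The forgetful map `π` from the Hopf algebra `H` of TAGs to the commutative Hopf
algebra `H^c` of graphs, `π(Γ,μ) = Γ`, is a morphism of Hopf algebras: it respects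
product, unit, coproduct and counit (the target product being commutative). -/
theorem tag_forgetful_hopf_morphism (K : Type) [Field K] [CharZero K] :
    (∀ u v : HC K, mulLinC K u v = mulLinC K v u) ∧
    (∀ x y : HT K, piH K (mulLin K x y) = mulLinC K (piH K x) (piH K y)) ∧
    (piH K (oneH K) = oneC K) ∧
    (TensorProduct.map (piH K) (piH K) ∘ₗ deltaH K = deltaC K ∘ₗ piH K) ∧
    (epsC K ∘ₗ piH K = epsH K) :=
  tag_forgetful_hopf_morphism_general K
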